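/- Let f_1, …, f_r (r ≥ 1) and g be nonzero polynomials in k[x] with f_1, …, f_r algebraically independent over k; set A = k[f_1,…,f_r], K = k(f_1,…,f_r), ω = df_1 ∧ ⋯ ∧ df_r, and let w ∈ Γ^n be such that deg_w h ≥ 0 for every nonzero h ∈ A. Set M = deg_w(ω ∧ dg) − deg_w ω − deg_w g. Assume g^w is algebraic over K^w, and let a and b be the quotient and remainder of deg_y Φ divided by [K^w(g^w) : K^w]. Then for every nonzero Φ ∈ A[y]: deg_w Φ(g) ≥ (deg_y Φ)·deg_w g + a·M = a·( [K^w(g^w):K^w]·deg_w g + M ) + b·deg_w g. -/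

import Mathlib

open MvPolynomial Polynomial

set_option synthInstance.maxHeartbeats 1000000
set_option maxHeartbeats 1000000

variable {k : Type*} [Field k] [CharZero k] {n : ℕ}
variable {Γ : Type*} [AddCommGroup Γ] [LinearOrder Γ] [IsOrderedAddMonoid Γ]

/-- The `w`-degree of a multivariate polynomial, with `wdeg w 0 = ⊥ = -∞`. -/
noncomputable def wdeg (w : Fin n → Γ) (f : MvPolynomial (Fin n) k) : WithBot Γ :=
  f.support.sup fun d => ((∑ i, d i • w i : Γ) : WithBot Γ)

/-- The leading `w`-homogeneous form `f^w` of `f`. -/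
noncomputable def lform (w : Fin n → Γ) (f : MvPolynomial (Fin n) k) :
    MvPolynomial (Fin n) k :=
  letI : DecidableEq (WithBot Γ) := Classical.decEq _
  ∑ d ∈ f.support.filter
      (fun d => ((∑ i, d i • w i : Γ) : WithBot Γ) = wdeg w f),
    MvPolynomial.monomial d (f.coeff d)

/-- `deg_w^g Φ = max_i deg_w (φ_i g^i)` for `Φ = Σ_i φ_i y^i`. -/
noncomputable def wdegG (w : Fin n → Γ) (g : MvPolynomial (Fin n) k)
    (Φ : Polynomial (MvPolynomial (Fin n) k)) : WithBot Γ :=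
  Φ.support.sup fun i => wdeg w (Φ.coeff i * g ^ i)

/-- The leading form `Φ^{w,g}` of `Φ` for the grading in which `x_j` has weight `w_j`
and `y` has weight `deg_w g`: the sum of `φ_i^w y^i` over those `i` with
`deg_w (φ_i g^i) = deg_w^g Φ`. -/
noncomputable def pLform (w : Fin n → Γ) (g : MvPolynomial (Fin n) k)
    (Φ : Polynomial (MvPolynomial (Fin n) k)) : Polynomial (MvPolynomial (Fin n) k) :=
  letI : DecidableEq (WithBot Γ) := Classical.decEq _
  ∑ i ∈ Φ.support.filter (fun i => wdeg w (Φ.coeff i * g ^ i) = wdegG w g Φ),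
    Polynomial.C (lform w (Φ.coeff i)) * Polynomial.X ^ i

/-- `m_w^g(Φ) = min { i : deg_w^g (∂_y^i Φ) = deg_w ((∂_y^i Φ)(g)) }`. -/
noncomputable def mwg (w : Fin n → Γ) (g : MvPolynomial (Fin n) k)
    (Φ : Polynomial (MvPolynomial (Fin n) k)) : ℕ :=
  sInf {i : ℕ |
    wdegG w g (Polynomial.derivative^[i] Φ) = wdeg w ((Polynomial.derivative^[i] Φ).eval g)}

/-- The `w`-degree of the differential form `dh_1 ∧ ⋯ ∧ dh_s`: the maximum over all
`s`-tuples of indices of the `w`-degree of the corresponding `s × s` Jacobian minor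
plus the sum of the corresponding weights (noninjective tuples contribute `⊥`). -/
noncomputable def wedgeDeg (w : Fin n → Γ) {s : ℕ} (h : Fin s → MvPolynomial (Fin n) k) :
    WithBot Γ :=
  Finset.univ.sup fun e : Fin s → Fin n =>
    wdeg w (Matrix.det (Matrix.of fun a b : Fin s => MvPolynomial.pderiv (e b) (h a)))
      + ((∑ b, w (e b) : Γ) : WithBot Γ)

/-- The initial algebra `A^w`: the `k`-subalgebra generated by `f^w` for `f ∈ A \ {0}`. -/
noncomputable def initAlg (w : Fin n → Γ) (A : Subalgebra k (MvPolynomial (Fin n) k)) :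
    Subalgebra k (MvPolynomial (Fin n) k) :=
  Algebra.adjoin k (lform w '' ((A : Set (MvPolynomial (Fin n) k)) \ {0}))

/-- The field of fractions `K^w` of `A^w`, realized as a subfield of the fraction field
of `k[x]`. -/
noncomputable def KW (w : Fin n → Γ) (A : Subalgebra k (MvPolynomial (Fin n) k)) :
    Subfield (FractionRing (MvPolynomial (Fin n) k)) :=
  Subfield.closure
    (algebraMap (MvPolynomial (Fin n) k) (FractionRing (MvPolynomial (Fin n) k)) ''
      (initAlg w A : Set (MvPolynomial (Fin n) k)))

/-- The field of fractions of a subalgebra `A` of `k[x]`, realized as a subfield of the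
fraction field of `k[x]`. -/
noncomputable def fracSub (A : Subalgebra k (MvPolynomial (Fin n) k)) :
    Subfield (FractionRing (MvPolynomial (Fin n) k)) :=
  Subfield.closure
    (algebraMap (MvPolynomial (Fin n) k) (FractionRing (MvPolynomial (Fin n) k)) ''
      (A : Set (MvPolynomial (Fin n) k)))

/-- A polynomial is `w`-homogeneous if all its monomials have the same `w`-degree. -/
def IsWHom (w : Fin n → Γ) (f : MvPolynomial (Fin n) k) : Prop :=
  ∃ γ : Γ, ∀ d ∈ f.support, (∑ i, d i • w i : Γ) = γ

/-!
Let `Ψ = Φ^{w,g}` be the leading form of `Φ` when `y` is given the weight `deg_w g`. Either the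
leading terms of `Φ(g)` do not cancel, so that `deg_w Φ(g) = deg_w^g Φ`, or `g^w` is a root of `Ψ`.
In the second case passing from `Θ` to `Θ'` lowers the multiplicity of the root `g^w` by one and
`deg_w^g` by exactly `deg_w g`, while the identity `ω ∧ dΘ(g) = Θ'(g) ω ∧ dg` (the coefficients of
`Θ` lie in `k[f]`) gives `deg_w Θ(g) ≥ deg_w Θ'(g) + M + deg_w g`. By induction,
`deg_w Φ(g) ≥ deg_w^g Φ + m M` with `m` at most the multiplicity of `g^w` as a root of `Ψ`.
As `Ψ` has coefficients in `A^w` and the minimal polynomial of `g^w` over `K^w` is separable,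
its `m`-th power divides `Ψ`, so `m N ≤ deg_y Φ`. Finally `M ≤ 0`, and
`deg_w^g Φ ≥ (deg_y Φ) deg_w g` because the leading coefficient of `Φ` has nonnegative degree.
-/

section SupAdd

variable {ι α : Type*} [AddCommMonoid α] [LinearOrder α] [IsOrderedAddMonoid α]

lemma WithBot.finsetSup_add (s : Finset ι) (u : ι → WithBot α) (c : WithBot α) :
    s.sup u + c = s.sup fun i => u i + c :=
  Finset.apply_sup_eq_sup_comp_of_linearOrder (· + c) (fun _ _ h => add_left_mono h)
    (WithBot.bot_add c)

lemma WithBot.add_finsetSup (s : Finset ι) (u : ι → WithBot α) (c : WithBot α) :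
    c + s.sup u = s.sup fun i => c + u i :=
  Finset.apply_sup_eq_sup_comp_of_linearOrder (c + ·) (fun _ _ h => add_right_mono h)
    (WithBot.add_bot c)

end SupAdd

section WeightedDegree

variable {k : Type*} [Field k] {n : ℕ}
variable {Γ : Type*} [AddCommGroup Γ] [LinearOrder Γ]
variable {w : Fin n → Γ} {f g : MvPolynomial (Fin n) k}

open Finsupp (weight)

lemma wdeg_eq_weightedTotalDegree' (w : Fin n → Γ) (f : MvPolynomial (Fin n) k) :
    wdeg w f = weightedTotalDegree' w f := by
  simp only [wdeg, weightedTotalDegree', Finsupp.weight_eq_sum]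

lemma le_wdeg {d : Fin n →₀ ℕ} (hd : d ∈ f.support) : (weight w d : WithBot Γ) ≤ wdeg w f := by
  rw [wdeg_eq_weightedTotalDegree']
  exact Finset.le_sup (f := fun d => (weight w d : WithBot Γ)) hd

lemma wdeg_le_iff {D : WithBot Γ} :
    wdeg w f ≤ D ↔ ∀ d ∈ f.support, (weight w d : WithBot Γ) ≤ D := by
  rw [wdeg_eq_weightedTotalDegree']
  exact Finset.sup_le_iff

@[simp]
lemma wdeg_eq_bot_iff : wdeg w f = ⊥ ↔ f = 0 := by
  rw [wdeg_eq_weightedTotalDegree', weightedTotalDegree'_eq_bot_iff]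

@[simp]
lemma wdeg_zero : wdeg w (0 : MvPolynomial (Fin n) k) = ⊥ :=
  wdeg_eq_bot_iff.2 rfl

lemma exists_wdeg_eq_coe (hf : f ≠ 0) : ∃ γ : Γ, wdeg w f = γ :=
  WithBot.ne_bot_iff_exists.1 (mt wdeg_eq_bot_iff.1 hf) |>.imp fun _ h => h.symm

lemma wdeg_add_le (f g : MvPolynomial (Fin n) k) :
    wdeg w (f + g) ≤ max (wdeg w f) (wdeg w g) := by
  refine wdeg_le_iff.2 fun d hd => ?_
  rcases Finset.mem_union.1 (support_add hd) with h | h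
  · exact le_max_of_le_left (le_wdeg h)
  · exact le_max_of_le_right (le_wdeg h)

lemma wdeg_sum_le {ι : Type*} (s : Finset ι) (p : ι → MvPolynomial (Fin n) k) :
    wdeg w (∑ i ∈ s, p i) ≤ s.sup fun i => wdeg w (p i) := by
  classical
  induction s using Finset.induction_on with
  | empty => simp
  | insert a s ha ih =>
    rw [Finset.sum_insert ha, Finset.sup_insert]
    exact (wdeg_add_le _ _).trans (max_le_max le_rfl ih)

lemma weightedHomogeneousComponent_eq_zero_of_wdeg_lt {γ : Γ} (h : wdeg w f < γ) :
    weightedHomogeneousComponent w γ f = 0 :=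
  weightedHomogeneousComponent_eq_zero' _ _ fun _ hd hγ =>
    (h.trans_le' (hγ ▸ le_wdeg hd)).false

lemma MvPolynomial.IsWeightedHomogeneous.wdeg_eq {γ : Γ} (hf : IsWeightedHomogeneous w f γ)
    (h : f ≠ 0) : wdeg w f = γ := by
  rw [wdeg_eq_weightedTotalDegree', hf.weighted_total_degree h]

lemma coeff_lform (w : Fin n → Γ) (f : MvPolynomial (Fin n) k) (d : Fin n →₀ ℕ) :
    MvPolynomial.coeff d (lform w f) =
      if (weight w d : WithBot Γ) = wdeg w f then MvPolynomial.coeff d f else 0 := by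
  classical
  rw [lform, MvPolynomial.coeff_sum]
  simp only [MvPolynomial.coeff_monomial, Finset.sum_ite_eq', Finset.mem_filter,
    MvPolynomial.mem_support_iff, Finsupp.weight_eq_sum]
  by_cases h : MvPolynomial.coeff d f = 0 <;> simp [h]

lemma lform_eq_weightedHomogeneousComponent {γ : Γ} (h : wdeg w f = γ) :
    lform w f = weightedHomogeneousComponent w γ f := by
  classical
  ext d
  simp [coeff_lform, coeff_weightedHomogeneousComponent, h]

@[simp]
lemma lform_zero : lform w (0 : MvPolynomial (Fin n) k) = 0 := by
  ext d
  simp [coeff_lform]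

lemma isWeightedHomogeneous_lform {γ : Γ} (h : wdeg w f = γ) :
    IsWeightedHomogeneous w (lform w f) γ :=
  lform_eq_weightedHomogeneousComponent h ▸ weightedHomogeneousComponent_isWeightedHomogeneous _ _

lemma lform_ne_zero (hf : f ≠ 0) : lform w f ≠ 0 := by
  obtain ⟨d, hd, hdeg⟩ := Finset.exists_mem_eq_sup f.support (support_nonempty.2 hf)
    fun d => (weight w d : WithBot Γ)
  intro h0
  have hcoeff := congr_arg (MvPolynomial.coeff d) h0
  rw [coeff_lform, if_pos (by rw [wdeg_eq_weightedTotalDegree']; exact hdeg.symm)] at hcoeff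
  exact MvPolynomial.mem_support_iff.1 hd hcoeff

lemma wdeg_lform (w : Fin n → Γ) (f : MvPolynomial (Fin n) k) : wdeg w (lform w f) = wdeg w f := by
  rcases eq_or_ne f 0 with rfl | hf
  · simp
  obtain ⟨γ, hγ⟩ := exists_wdeg_eq_coe (w := w) hf
  rw [hγ, (isWeightedHomogeneous_lform hγ).wdeg_eq (lform_ne_zero hf)]

lemma wdeg_lt_coe_iff {γ : Γ} :
    wdeg w f < γ ↔ ∀ d ∈ f.support, (weight w d : WithBot Γ) < γ := by
  rw [wdeg_eq_weightedTotalDegree']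
  exact Finset.sup_lt_iff (WithBot.bot_lt_coe γ)

lemma wdeg_sub_lform_lt (hf : f ≠ 0) : wdeg w (f - lform w f) < wdeg w f := by
  obtain ⟨γ, hγ⟩ := exists_wdeg_eq_coe (w := w) hf
  rw [hγ, wdeg_lt_coe_iff]
  intro d hd
  rw [MvPolynomial.mem_support_iff, MvPolynomial.coeff_sub, coeff_lform, hγ] at hd
  split_ifs at hd with h
  · exact absurd (sub_self _) hd
  · exact (hγ ▸ le_wdeg (by simpa using hd)).lt_of_ne h

lemma wdeg_eq_and_lform_eq_of_wdeg_sub_lt {h : MvPolynomial (Fin n) k} {γ : Γ}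
    (hh : IsWeightedHomogeneous w h γ) (h0 : h ≠ 0) (hlt : wdeg w (f - h) < γ) :
    wdeg w f = γ ∧ lform w f = h := by
  have hcomp : weightedHomogeneousComponent w γ f = h := by
    rw [← add_sub_cancel h f, map_add, hh.weightedHomogeneousComponent_same,
      weightedHomogeneousComponent_eq_zero_of_wdeg_lt hlt, add_zero]
  have hdeg : wdeg w f = γ := by
    refine le_antisymm ?_ (not_lt.1 fun hf => h0 ?_)
    · rw [← add_sub_cancel h f]
      exact (wdeg_add_le _ _).trans (max_le (hh.wdeg_eq h0).le hlt.le)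
    · rw [← hcomp, weightedHomogeneousComponent_eq_zero_of_wdeg_lt hf]
  exact ⟨hdeg, by rw [lform_eq_weightedHomogeneousComponent hdeg, hcomp]⟩

lemma wdeg_C {c : k} (hc : c ≠ 0) : wdeg w (MvPolynomial.C c : MvPolynomial (Fin n) k) = 0 :=
  (isWeightedHomogeneous_C w c).wdeg_eq (C_ne_zero.2 hc)

lemma lform_C (c : k) : lform w (MvPolynomial.C c : MvPolynomial (Fin n) k) = MvPolynomial.C c := by
  rcases eq_or_ne c 0 with rfl | hc
  · simp
  rw [lform_eq_weightedHomogeneousComponent (wdeg_C hc),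
    (isWeightedHomogeneous_C w c).weightedHomogeneousComponent_same]

variable [IsOrderedAddMonoid Γ]

lemma wdeg_mul_le (f g : MvPolynomial (Fin n) k) :
    wdeg w (f * g) ≤ wdeg w f + wdeg w g := by
  classical
  refine wdeg_le_iff.2 fun d hd => ?_
  obtain ⟨a, ha, b, hb, rfl⟩ := Finset.mem_add.1 (support_mul f g hd)
  rw [map_add, WithBot.coe_add]
  exact add_le_add (le_wdeg ha) (le_wdeg hb)

lemma wdeg_mul_and_lform_mul (hf : f ≠ 0) (hg : g ≠ 0) :
    wdeg w (f * g) = wdeg w f + wdeg w g ∧ lform w (f * g) = lform w f * lform w g := by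
  obtain ⟨γ, hγ⟩ := exists_wdeg_eq_coe (w := w) hf
  obtain ⟨δ, hδ⟩ := exists_wdeg_eq_coe (w := w) hg
  rw [hγ, hδ, ← WithBot.coe_add]
  refine wdeg_eq_and_lform_eq_of_wdeg_sub_lt
    ((isWeightedHomogeneous_lform hγ).mul (isWeightedHomogeneous_lform hδ))
    (mul_ne_zero (lform_ne_zero hf) (lform_ne_zero hg)) ?_
  rw [show f * g - lform w f * lform w g
      = lform w f * (g - lform w g) + (f - lform w f) * g by ring, WithBot.coe_add]
  refine (wdeg_add_le _ _).trans_lt (max_lt ?_ ?_)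
  · refine (wdeg_mul_le _ _).trans_lt (WithBot.add_lt_add_of_le_of_lt ?_ ?_ ?_)
    · simp [wdeg_lform, hγ]
    · rw [wdeg_lform, hγ]
    · exact hδ ▸ wdeg_sub_lform_lt hg
  · refine (wdeg_mul_le _ _).trans_lt (WithBot.add_lt_add_of_lt_of_le ?_ ?_ ?_)
    · simp [hδ]
    · exact hγ ▸ wdeg_sub_lform_lt hf
    · rw [hδ]

lemma wdeg_mul (f g : MvPolynomial (Fin n) k) : wdeg w (f * g) = wdeg w f + wdeg w g := by
  rcases eq_or_ne f 0 with rfl | hf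
  · simp
  rcases eq_or_ne g 0 with rfl | hg
  · simp
  exact (wdeg_mul_and_lform_mul hf hg).1

lemma lform_mul (f g : MvPolynomial (Fin n) k) : lform w (f * g) = lform w f * lform w g := by
  rcases eq_or_ne f 0 with rfl | hf
  · simp
  rcases eq_or_ne g 0 with rfl | hg
  · simp
  exact (wdeg_mul_and_lform_mul hf hg).2

lemma wdeg_pow (f : MvPolynomial (Fin n) k) (i : ℕ) : wdeg w (f ^ i) = i • wdeg w f := by
  induction i with
  | zero => rw [pow_zero, zero_nsmul, ← map_one MvPolynomial.C, wdeg_C one_ne_zero]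
  | succ i ih => rw [pow_succ, wdeg_mul, ih, succ_nsmul]

lemma lform_pow (f : MvPolynomial (Fin n) k) (i : ℕ) : lform w (f ^ i) = lform w f ^ i := by
  induction i with
  | zero => rw [pow_zero, pow_zero, ← map_one MvPolynomial.C, lform_C]
  | succ i ih => rw [pow_succ, lform_mul, ih, pow_succ]

end WeightedDegree

section LeadingFormAlongG

variable {k : Type*} [Field k] {n : ℕ}
variable {Γ : Type*} [AddCommGroup Γ] [LinearOrder Γ]
variable {w : Fin n → Γ} {g : MvPolynomial (Fin n) k} {Θ : Polynomial (MvPolynomial (Fin n) k)}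

lemma le_wdegG (i : ℕ) : wdeg w (Θ.coeff i * g ^ i) ≤ wdegG w g Θ := by
  by_cases hi : i ∈ Θ.support
  · exact Finset.le_sup (f := fun i => wdeg w (Θ.coeff i * g ^ i)) hi
  · rw [Polynomial.notMem_support_iff.1 hi, zero_mul, wdeg_zero]
    exact bot_le

lemma exists_wdeg_coeff_mul_pow_eq_wdegG (hΘ : Θ ≠ 0) :
    ∃ i, Θ.coeff i ≠ 0 ∧ wdeg w (Θ.coeff i * g ^ i) = wdegG w g Θ := by
  obtain ⟨i, hi, h⟩ := Finset.exists_mem_eq_sup Θ.support (Polynomial.support_nonempty.2 hΘ)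
    fun i => wdeg w (Θ.coeff i * g ^ i)
  exact ⟨i, Polynomial.mem_support_iff.1 hi, h.symm⟩

lemma wdeg_eval_le_wdegG (w : Fin n → Γ) (g : MvPolynomial (Fin n) k)
    (Θ : Polynomial (MvPolynomial (Fin n) k)) : wdeg w (Θ.eval g) ≤ wdegG w g Θ := by
  rw [Polynomial.eval_eq_sum, Polynomial.sum_def]
  exact wdeg_sum_le _ _

lemma coeff_pLform (i : ℕ) :
    (pLform w g Θ).coeff i =
      if wdeg w (Θ.coeff i * g ^ i) = wdegG w g Θ then lform w (Θ.coeff i) else 0 := by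
  classical
  rw [pLform, Polynomial.finsetSum_coeff]
  simp only [Polynomial.coeff_C_mul_X_pow, Finset.sum_ite_eq, Finset.mem_filter,
    Polynomial.mem_support_iff]
  by_cases hi : Θ.coeff i = 0 <;> simp [hi]

lemma wdeg_coeff_mul_pow_eq_wdegG {i : ℕ} (h : (pLform w g Θ).coeff i ≠ 0) :
    wdeg w (Θ.coeff i * g ^ i) = wdegG w g Θ := by
  rw [coeff_pLform] at h
  exact (ite_ne_right_iff.1 h).1

lemma pLform_ne_zero (hΘ : Θ ≠ 0) : pLform w g Θ ≠ 0 := by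
  obtain ⟨i, hi, htop⟩ := exists_wdeg_coeff_mul_pow_eq_wdegG (w := w) (g := g) hΘ
  intro h0
  have hcoeff := congr_arg (Polynomial.coeff · i) h0
  simp only [coeff_pLform, if_pos htop, Polynomial.coeff_zero] at hcoeff
  exact lform_ne_zero hi hcoeff

lemma natDegree_pLform_le : (pLform w g Θ).natDegree ≤ Θ.natDegree :=
  Polynomial.natDegree_le_iff_coeff_eq_zero.2 fun i hi => by
    rw [coeff_pLform, Polynomial.coeff_eq_zero_of_natDegree_lt hi, lform_zero, ite_self]

lemma coeff_pLform_mem_initAlg {A : Subalgebra k (MvPolynomial (Fin n) k)}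
    (hΘA : ∀ i, Θ.coeff i ∈ A) (i : ℕ) : (pLform w g Θ).coeff i ∈ initAlg w A := by
  rw [coeff_pLform]
  split_ifs
  · rcases eq_or_ne (Θ.coeff i) 0 with h0 | h0
    · rw [h0, lform_zero]
      exact zero_mem _
    · exact Algebra.subset_adjoin ⟨_, ⟨hΘA i, h0⟩, rfl⟩
  · exact zero_mem _

variable [IsOrderedAddMonoid Γ]

lemma eval_pLform_eq_zero (hg : g ≠ 0) (hΘ : Θ ≠ 0)
    (hlt : wdeg w (Θ.eval g) < wdegG w g Θ) : (pLform w g Θ).eval (lform w g) = 0 := by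
  obtain ⟨i, hi, htop⟩ := exists_wdeg_coeff_mul_pow_eq_wdegG (w := w) (g := g) hΘ
  obtain ⟨γ, hγ⟩ := exists_wdeg_eq_coe (w := w) (mul_ne_zero hi (pow_ne_zero i hg))
  rw [htop] at hγ
  have hcomp := weightedHomogeneousComponent_eq_zero_of_wdeg_lt (hγ ▸ hlt)
  rw [Polynomial.eval_eq_sum_range, map_sum] at hcomp
  rw [Polynomial.eval_eq_sum_range' (Nat.lt_succ_of_le natDegree_pLform_le), ← hcomp]
  refine Finset.sum_congr rfl fun i _ => ?_
  rw [coeff_pLform]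
  split_ifs with h
  · rw [← lform_pow, ← lform_mul, lform_eq_weightedHomogeneousComponent (h.trans hγ)]
  · rw [zero_mul, weightedHomogeneousComponent_eq_zero_of_wdeg_lt
      (((le_wdegG i).lt_of_ne h).trans_eq hγ)]

lemma natDegree_nsmul_wdeg_le_wdegG (hlead : 0 ≤ wdeg w Θ.leadingCoeff) :
    Θ.natDegree • wdeg w g ≤ wdegG w g Θ :=
  calc Θ.natDegree • wdeg w g ≤ wdeg w Θ.leadingCoeff + Θ.natDegree • wdeg w g :=
        le_add_of_nonneg_left hlead
    _ = wdeg w (Θ.leadingCoeff * g ^ Θ.natDegree) := by rw [wdeg_mul, wdeg_pow]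
    _ ≤ wdegG w g Θ := le_wdegG _

end LeadingFormAlongG

section Derivative

variable {k : Type*} [Field k] {n : ℕ}
variable {Γ : Type*} [AddCommGroup Γ] [LinearOrder Γ] [IsOrderedAddMonoid Γ]
variable {w : Fin n → Γ} {g : MvPolynomial (Fin n) k} {Θ : Polynomial (MvPolynomial (Fin n) k)}
  {dg : Γ}

lemma coeff_derivative_eq_mul_C (Θ : Polynomial (MvPolynomial (Fin n) k)) (i : ℕ) :
    (derivative Θ).coeff i = Θ.coeff (i + 1) * MvPolynomial.C ((i : k) + 1) := by
  rw [Polynomial.coeff_derivative, map_add, map_natCast, map_one]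

variable [CharZero k]

lemma wdeg_coeff_derivative_mul_pow_add (hdg : wdeg w g = dg) (i : ℕ) :
    wdeg w ((derivative Θ).coeff i * g ^ i) + dg = wdeg w (Θ.coeff (i + 1) * g ^ (i + 1)) := by
  rw [coeff_derivative_eq_mul_C, wdeg_mul, wdeg_mul, wdeg_mul, wdeg_C (Nat.cast_add_one_ne_zero i),
    wdeg_pow, wdeg_pow, hdg, add_zero, succ_nsmul, add_assoc]

lemma wdegG_derivative_add (hdg : wdeg w g = dg) (hΨ : 0 < (pLform w g Θ).natDegree) :
    wdegG w g (derivative Θ) + dg = wdegG w g Θ := by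
  refine le_antisymm ?_ ?_
  · rw [wdegG, WithBot.finsetSup_add]
    exact Finset.sup_le fun i _ => (wdeg_coeff_derivative_mul_pow_add hdg i).trans_le (le_wdegG _)
  · obtain ⟨d, hd⟩ := Nat.exists_eq_succ_of_ne_zero hΨ.ne'
    have hΘ : Θ ≠ 0 := by
      rintro rfl
      simp [pLform] at hΨ
    have htop := wdeg_coeff_mul_pow_eq_wdegG (i := (pLform w g Θ).natDegree) (by
      rw [Polynomial.coeff_natDegree, Ne, Polynomial.leadingCoeff_eq_zero]
      exact pLform_ne_zero hΘ)
    rw [hd, ← wdeg_coeff_derivative_mul_pow_add hdg] at htop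
    exact htop ▸ add_left_mono (le_wdegG d)

lemma pLform_derivative (hdg : wdeg w g = dg) (hΨ : 0 < (pLform w g Θ).natDegree) :
    pLform w g (derivative Θ) = derivative (pLform w g Θ) := by
  refine Polynomial.ext fun i => ?_
  rw [coeff_derivative_eq_mul_C (pLform w g Θ), coeff_pLform, coeff_pLform,
    ← wdegG_derivative_add hdg hΨ, ← wdeg_coeff_derivative_mul_pow_add hdg]
  simp only [WithBot.add_right_inj WithBot.coe_ne_bot]
  split_ifs
  · rw [coeff_derivative_eq_mul_C, lform_mul, lform_C]
  · rw [zero_mul]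

end Derivative

section Induction

variable {k : Type*} [Field k] [CharZero k] {n : ℕ}
variable {Γ : Type*} [AddCommGroup Γ] [LinearOrder Γ] [IsOrderedAddMonoid Γ]
variable {w : Fin n → Γ} {g : MvPolynomial (Fin n) k} {dg : Γ} {M : WithBot Γ}

theorem exists_le_rootMultiplicity_and_wdegG_add_nsmul_le (hg : g ≠ 0) (hdg : wdeg w g = dg)
    (S : Subalgebra k (MvPolynomial (Fin n) k))
    (hstep : ∀ Θ : Polynomial (MvPolynomial (Fin n) k), (∀ i, Θ.coeff i ∈ S) →
      wdeg w ((derivative Θ).eval g) + (M + dg) ≤ wdeg w (Θ.eval g))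
    {Θ : Polynomial (MvPolynomial (Fin n) k)} (hΘ : Θ ≠ 0) (hΘS : ∀ i, Θ.coeff i ∈ S) :
    ∃ m, m ≤ (pLform w g Θ).rootMultiplicity (lform w g) ∧
      wdegG w g Θ + m • M ≤ wdeg w (Θ.eval g) := by
  induction hd : Θ.natDegree using Nat.strong_induction_on generalizing Θ with
  | _ d ih =>
    rcases (wdeg_eval_le_wdegG w g Θ).eq_or_lt with heq | hlt
    · exact ⟨0, Nat.zero_le _, by rw [zero_nsmul, add_zero, heq]⟩
    have hroot := eval_pLform_eq_zero hg hΘ hlt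
    have hΨ : 0 < (pLform w g Θ).natDegree :=
      Polynomial.natDegree_pos_of_eval₂_root (pLform_ne_zero hΘ) (RingHom.id _) hroot fun _ h => h
    have hΘdeg : 0 < Θ.natDegree := hΨ.trans_le natDegree_pLform_le
    have hΘ' : derivative Θ ≠ 0 := fun h0 => hΘdeg.ne' (Polynomial.derivative_eq_zero.1 h0)
    have hΘ'S : ∀ i, (derivative Θ).coeff i ∈ S := fun i => by
      rw [Polynomial.coeff_derivative]
      exact mul_mem (hΘS _) (add_mem (natCast_mem S i) (one_mem S))
    obtain ⟨m, hm, hle⟩ :=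
      ih _ (hd ▸ Polynomial.natDegree_derivative_lt hΘdeg.ne') hΘ' hΘ'S rfl
    refine ⟨m + 1, ?_, ?_⟩
    · rw [pLform_derivative hdg hΨ, Polynomial.derivative_rootMultiplicity_of_root hroot] at hm
      have hpos := (Polynomial.rootMultiplicity_pos (pLform_ne_zero hΘ)).2 hroot
      omega
    · calc wdegG w g Θ + (m + 1) • M = (wdegG w g (derivative Θ) + m • M) + (M + dg) := by
            rw [← wdegG_derivative_add hdg hΨ, succ_nsmul]
            abel
        _ ≤ wdeg w ((derivative Θ).eval g) + (M + dg) := add_left_mono hle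
        _ ≤ wdeg w (Θ.eval g) := hstep Θ hΘS

end Induction

namespace MvPolynomial

variable {σ R : Type*}

section CommSemiring

variable [CommSemiring R]

noncomputable def grad (h : MvPolynomial σ R) : σ → MvPolynomial σ R := fun j => pderiv j h

lemma grad_mem_span_of_mem_adjoin {ι : Type*} (f : ι → MvPolynomial σ R) {h : MvPolynomial σ R}
    (hh : h ∈ Algebra.adjoin R (Set.range f)) :
    grad h ∈ Submodule.span (MvPolynomial σ R) (Set.range (grad ∘ f)) := by
  induction hh using Algebra.adjoin_induction with
  | mem x hx =>
    obtain ⟨a, rfl⟩ := hx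
    exact Submodule.subset_span ⟨a, rfl⟩
  | algebraMap c =>
    rw [show grad (algebraMap R _ c) = 0 by funext j; exact (pderiv j).map_algebraMap c]
    exact zero_mem _
  | add x y _ _ hx hy =>
    rw [show grad (x + y) = grad x + grad y by funext j; exact map_add _ x y]
    exact add_mem hx hy
  | mul x y _ _ hx hy =>
    rw [show grad (x * y) = x • grad y + y • grad x by funext j; exact (pderiv j).leibniz x y]
    exact add_mem (Submodule.smul_mem _ x hy) (Submodule.smul_mem _ y hx)

lemma pderiv_eval (j : σ) (g : MvPolynomial σ R) (Θ : Polynomial (MvPolynomial σ R)) :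
    pderiv j (Θ.eval g) =
      (derivative Θ).eval g * pderiv j g + Θ.sum fun i θ => g ^ i * pderiv j θ := by
  induction Θ using Polynomial.induction_on' with
  | add p q hp hq =>
    rw [Polynomial.eval_add, map_add, hp, hq, Polynomial.derivative_add, Polynomial.eval_add,
      Polynomial.sum_add_index p q _ (fun i => by rw [map_zero, mul_zero])
        (fun i a b => by rw [map_add, mul_add])]
    ring
  | monomial i θ =>
    rw [Polynomial.eval_monomial, Derivation.leibniz, Derivation.leibniz_pow,
      Polynomial.derivative_monomial, Polynomial.eval_monomial,
      Polynomial.sum_monomial_index θ _ (by rw [map_zero, mul_zero])]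
    simp only [smul_eq_mul, nsmul_eq_mul]
    ring

end CommSemiring

lemma grad_eval_sub_smul_mem_span [CommRing R] {ι : Type*} (f : ι → MvPolynomial σ R)
    (g : MvPolynomial σ R) {Θ : Polynomial (MvPolynomial σ R)}
    (hΘ : ∀ i, Θ.coeff i ∈ Algebra.adjoin R (Set.range f)) :
    grad (Θ.eval g) - (derivative Θ).eval g • grad g ∈
      Submodule.span (MvPolynomial σ R) (Set.range (grad ∘ f)) := by
  have : grad (Θ.eval g) - (derivative Θ).eval g • grad g =
      ∑ i ∈ Θ.support, g ^ i • grad (Θ.coeff i) := by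
    funext j
    simp [grad, pderiv_eval, Polynomial.sum_def, Finset.sum_apply]
  rw [this]
  exact Submodule.sum_mem _ fun i _ =>
    Submodule.smul_mem _ _ (grad_mem_span_of_mem_adjoin f (hΘ i))

end MvPolynomial

lemma Matrix.det_of_snoc_smul_add_sum {R : Type*} [CommRing R] {r : ℕ}
    (v : Fin r → Fin (r + 1) → R) (x : Fin (r + 1) → R) (t : R) (c : Fin r → R) :
    (Matrix.of (Fin.snoc v (t • x + ∑ a, c a • v a) : Fin (r + 1) → Fin (r + 1) → R)).det =
      t * (Matrix.of (Fin.snoc v x : Fin (r + 1) → Fin (r + 1) → R)).det := by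
  set A := Matrix.of (Fin.snoc v x : Fin (r + 1) → Fin (r + 1) → R)
  have hrow : t • x + ∑ a, c a • v a = ∑ i, (Fin.snoc c t : Fin (r + 1) → R) i • A i := by
    have hArow : ∀ i, A i = (Fin.snoc v x : Fin (r + 1) → Fin (r + 1) → R) i := fun _ => rfl
    simp [Fin.sum_univ_castSucc, hArow, add_comm]
  have hA : Matrix.of (Fin.snoc v (t • x + ∑ a, c a • v a) : Fin (r + 1) → Fin (r + 1) → R) =
      A.updateRow (Fin.last r) (∑ i, (Fin.snoc c t : Fin (r + 1) → R) i • A i) := by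
    rw [← hrow]
    ext i j
    induction i using Fin.lastCases <;> simp [A, Matrix.updateRow_apply]
  rw [hA, Matrix.det_updateRow_sum, Fin.snoc_last, smul_eq_mul]

section WedgeDegree

variable {k : Type*} [Field k] {n : ℕ}
variable {Γ : Type*} [AddCommGroup Γ] [LinearOrder Γ]
variable {r : ℕ} (w : Fin n → Γ) (f : Fin r → MvPolynomial (Fin n) k)

lemma le_wedgeDeg (e : Fin r → Fin n) :
    wdeg w (Matrix.of fun a b => pderiv (e b) (f a)).det + ((∑ b, w (e b) : Γ) : WithBot Γ) ≤
      wedgeDeg w f :=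
  Finset.le_sup (f := fun e : Fin r → Fin n =>
    wdeg w (Matrix.of fun a b => pderiv (e b) (f a)).det + ((∑ b, w (e b) : Γ) : WithBot Γ))
    (Finset.mem_univ e)

variable [IsOrderedAddMonoid Γ]

lemma wdeg_pderiv_add_le (j : Fin n) (h : MvPolynomial (Fin n) k) :
    wdeg w (pderiv j h) + w j ≤ wdeg w h := by
  rw [wdeg_eq_weightedTotalDegree', weightedTotalDegree', WithBot.finsetSup_add]
  refine Finset.sup_le fun d hd => ?_
  rw [MvPolynomial.mem_support_iff, MvPolynomial.coeff_pderiv] at hd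
  simpa [Finsupp.weight_single] using
    le_wdeg (w := w) (MvPolynomial.mem_support_iff.2 (left_ne_zero_of_mul hd))

lemma wedgeDeg_snoc_le (h : MvPolynomial (Fin n) k) :
    wedgeDeg w (Fin.snoc f h) ≤ wedgeDeg w f + wdeg w h := by
  refine Finset.sup_le fun e _ => ?_
  rw [Matrix.det_succ_row _ (Fin.last r)]
  refine (add_le_add_left (wdeg_sum_le _ _) _).trans ?_
  rw [WithBot.finsetSup_add]
  refine Finset.sup_le fun j _ => ?_
  have hsign : wdeg w ((-1) ^ ((Fin.last r : ℕ) + j) : MvPolynomial (Fin n) k) = 0 := by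
    rw [← map_one MvPolynomial.C, ← map_neg, ← map_pow]
    exact wdeg_C (pow_ne_zero _ (neg_ne_zero.2 one_ne_zero))
  simp only [wdeg_mul, hsign, zero_add, Matrix.of_apply, Fin.snoc_last,
    Matrix.submatrix, Fin.succAbove_last, Fin.snoc_castSucc]
  rw [Fin.sum_univ_succAbove _ j, WithBot.coe_add, add_add_add_comm, add_comm (wedgeDeg w f)]
  exact add_le_add (wdeg_pderiv_add_le w _ h) (le_wedgeDeg w f (e ∘ j.succAbove))

lemma wedgeDeg_snoc_eval (g : MvPolynomial (Fin n) k) {Θ : Polynomial (MvPolynomial (Fin n) k)}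
    (hΘ : ∀ i, Θ.coeff i ∈ Algebra.adjoin k (Set.range f)) :
    wedgeDeg w (Fin.snoc f (Θ.eval g)) =
      wdeg w ((derivative Θ).eval g) + wedgeDeg w (Fin.snoc f g) := by
  obtain ⟨c, hc⟩ := (Submodule.mem_span_range_iff_exists_fun _).1
    (MvPolynomial.grad_eval_sub_smul_mem_span f g hΘ)
  have hsnoc : ∀ (h : MvPolynomial (Fin n) k) (e : Fin (r + 1) → Fin n),
      (Matrix.of fun a b => pderiv (e b) ((Fin.snoc f h : Fin (r + 1) → _) a)) =
        Matrix.of (Fin.snoc (fun a b => pderiv (e b) (f a)) fun b => pderiv (e b) h :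
          Fin (r + 1) → Fin (r + 1) → MvPolynomial (Fin n) k) := by
    intro h e
    ext a b
    induction a using Fin.lastCases <;> simp
  have hrow : ∀ e : Fin (r + 1) → Fin n, (fun b => pderiv (e b) (Θ.eval g)) =
      (derivative Θ).eval g • (fun b => pderiv (e b) g) +
        ∑ a, c a • fun b => pderiv (e b) (f a) := by
    intro e
    funext b
    have hcb := congr_fun hc (e b)
    simp only [Finset.sum_apply, Pi.smul_apply, Function.comp_apply, Pi.sub_apply, smul_eq_mul,
      MvPolynomial.grad] at hcb
    simp [Finset.sum_apply, hcb]
  rw [wedgeDeg, wedgeDeg, WithBot.add_finsetSup]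
  refine Finset.sup_congr rfl fun e _ => ?_
  rw [hsnoc, hsnoc, hrow, Matrix.det_of_snoc_smul_add_sum, wdeg_mul, add_assoc]

lemma wdeg_derivative_eval_add_wedgeDeg_le (g : MvPolynomial (Fin n) k)
    {Θ : Polynomial (MvPolynomial (Fin n) k)}
    (hΘ : ∀ i, Θ.coeff i ∈ Algebra.adjoin k (Set.range f)) :
    wdeg w ((derivative Θ).eval g) + wedgeDeg w (Fin.snoc f g) ≤
      wedgeDeg w f + wdeg w (Θ.eval g) :=
  wedgeDeg_snoc_eval w f g hΘ ▸ wedgeDeg_snoc_le w f _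

lemma wedgeDeg_snoc_add_neg_sub_nonpos {dω dg : Γ} (hdω : wedgeDeg w f = dω)
    {g : MvPolynomial (Fin n) k} (hdg : wdeg w g = dg) :
    wedgeDeg w (Fin.snoc f g) + ((-dω - dg : Γ) : WithBot Γ) ≤ 0 :=
  calc wedgeDeg w (Fin.snoc f g) + ((-dω - dg : Γ) : WithBot Γ)
      ≤ wedgeDeg w f + wdeg w g + ((-dω - dg : Γ) : WithBot Γ) :=
        add_le_add_left (wedgeDeg_snoc_le w f g) _
    _ = 0 := by
        rw [hdω, hdg, ← WithBot.coe_add, ← WithBot.coe_add,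
          show dω + dg + (-dω - dg) = 0 by abel, WithBot.coe_zero]

lemma wdeg_derivative_eval_add_le {dω dg : Γ} (hdω : wedgeDeg w f = dω)
    (g : MvPolynomial (Fin n) k) {Θ : Polynomial (MvPolynomial (Fin n) k)}
    (hΘ : ∀ i, Θ.coeff i ∈ Algebra.adjoin k (Set.range f)) :
    wdeg w ((derivative Θ).eval g) +
        (wedgeDeg w (Fin.snoc f g) + ((-dω - dg : Γ) : WithBot Γ) + dg) ≤
      wdeg w (Θ.eval g) :=
  calc wdeg w ((derivative Θ).eval g) +
        (wedgeDeg w (Fin.snoc f g) + ((-dω - dg : Γ) : WithBot Γ) + dg)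
      = wdeg w ((derivative Θ).eval g) + wedgeDeg w (Fin.snoc f g) + ((-dω : Γ) : WithBot Γ) := by
        rw [add_assoc (wedgeDeg w _), ← WithBot.coe_add, sub_add_cancel, add_assoc]
    _ ≤ dω + wdeg w (Θ.eval g) + ((-dω : Γ) : WithBot Γ) :=
        add_le_add_left (hdω ▸ wdeg_derivative_eval_add_wedgeDeg_le w f g hΘ) _
    _ = wdeg w (Θ.eval g) := by
        rw [add_right_comm, ← WithBot.coe_add, add_neg_cancel, WithBot.coe_zero, zero_add]

end WedgeDegree

section MinpolyPower

variable {F L : Type*} [Field F] [Field L] [Algebra F L] {x : L}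

theorem minpoly_pow_dvd_of_le_rootMultiplicity (hx : IsSeparable F x) {q : F[X]} (hq : q ≠ 0)
    {m : ℕ} (hm : m ≤ (q.map (algebraMap F L)).rootMultiplicity x) : minpoly F x ^ m ∣ q := by
  induction m generalizing q with
  | zero => simp
  | succ m ih =>
    have hroot : Polynomial.aeval x q = 0 := by
      rw [Polynomial.aeval_def, ← Polynomial.eval_map]
      exact (Polynomial.rootMultiplicity_pos (Polynomial.map_ne_zero hq)).1 (by omega)
    obtain ⟨q₁, rfl⟩ := minpoly.dvd F x hroot
    have hq₁ : q₁ ≠ 0 := right_ne_zero_of_mul hq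
    have hmap := Polynomial.map_ne_zero (f := algebraMap F L) hq
    rw [Polynomial.map_mul] at hmap hm
    rw [Polynomial.rootMultiplicity_mul hmap] at hm
    have hmult := Polynomial.rootMultiplicity_le_one_of_separable
      (Polynomial.Separable.map (f := algebraMap F L) hx) x
    rw [pow_succ']
    exact mul_dvd_mul_left _ (ih hq₁ (by omega))

theorem mul_natDegree_minpoly_le (hx : IsSeparable F x) {p : L[X]} (hp : p ≠ 0)
    (hlift : p ∈ Polynomial.lifts (algebraMap F L)) {m : ℕ} (hm : m ≤ p.rootMultiplicity x) :
    m * (minpoly F x).natDegree ≤ p.natDegree := by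
  obtain ⟨q, rfl⟩ := Polynomial.mem_lifts _ |>.1 hlift
  have hq : q ≠ 0 := by rintro rfl; exact hp (Polynomial.map_zero _)
  rw [Polynomial.natDegree_map, ← Polynomial.natDegree_pow]
  exact Polynomial.natDegree_le_of_dvd (minpoly_pow_dvd_of_le_rootMultiplicity hx hq hm) hq

end MinpolyPower

lemma nsmul_add_div_nsmul_eq {α : Type*} [AddCommMonoid α] (d N : ℕ) (x y : α) :
    d • x + (d / N) • y = (d / N) • (N • x + y) + (d % N) • x := by
  nth_rewrite 1 [← Nat.div_add_mod d N]
  rw [add_nsmul, mul_comm, mul_nsmul', nsmul_add, add_right_comm]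

section InitialField

variable {k : Type*} [Field k] [CharZero k] {n : ℕ}
variable {Γ : Type*} [AddCommGroup Γ] [LinearOrder Γ]

local notation "ι" => algebraMap (MvPolynomial (Fin n) k) (FractionRing (MvPolynomial (Fin n) k))

theorem mul_natDegree_minpoly_le_of_le_rootMultiplicity_pLform {w : Fin n → Γ}
    {A : Subalgebra k (MvPolynomial (Fin n) k)} {g : MvPolynomial (Fin n) k}
    (hint : IsIntegral (KW w A) (ι (lform w g))) {Φ : Polynomial (MvPolynomial (Fin n) k)}
    (hΦ : Φ ≠ 0) (hΦA : ∀ i, Φ.coeff i ∈ A) {m : ℕ}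
    (hm : m ≤ (pLform w g Φ).rootMultiplicity (lform w g)) :
    m * (minpoly (KW w A) (ι (lform w g))).natDegree ≤ Φ.natDegree := by
  have hΨ : (pLform w g Φ).map ι ≠ 0 :=
    (Polynomial.map_ne_zero_iff (IsFractionRing.injective _ _)).2 (pLform_ne_zero hΦ)
  have hlift : (pLform w g Φ).map ι ∈ Polynomial.lifts (algebraMap (KW w A) _) :=
    (Polynomial.lifts_iff_coeff_lifts _).2 fun i =>
      ⟨⟨_, Subfield.subset_closure ⟨_, coeff_pLform_mem_initAlg (g := g) hΦA i, rfl⟩⟩,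
        by rw [Polynomial.coeff_map]; rfl⟩
  calc m * (minpoly (KW w A) (ι (lform w g))).natDegree ≤ ((pLform w g Φ).map ι).natDegree :=
        mul_natDegree_minpoly_le (minpoly.irreducible hint).separable hΨ hlift
          (hm.trans (Polynomial.le_rootMultiplicity_map hΨ _))
    _ ≤ Φ.natDegree := Polynomial.natDegree_map_le.trans natDegree_pLform_le

end InitialField

theorem stmt7_general (r : ℕ) (f : Fin r → MvPolynomial (Fin n) k)
    (g : MvPolynomial (Fin n) k) (hg : g ≠ 0) (w : Fin n → Γ)
    (A : Subalgebra k (MvPolynomial (Fin n) k)) (hA : A = Algebra.adjoin k (Set.range f))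
    (hw : ∀ h ∈ A, h ≠ 0 → ((0 : Γ) : WithBot Γ) ≤ wdeg w h)
    (halg : IsAlgebraic (KW w A)
      (algebraMap (MvPolynomial (Fin n) k) (FractionRing (MvPolynomial (Fin n) k))
        (lform w g)))
    (Φ : Polynomial (MvPolynomial (Fin n) k)) (hΦ : Φ ≠ 0) (hΦA : ∀ i, Φ.coeff i ∈ A)
    (dω dg : Γ) (hdω : wedgeDeg w f = (dω : WithBot Γ)) (hdg : wdeg w g = (dg : WithBot Γ))
    (N : ℕ)
    (hN : N = Module.finrank (KW w A)
      (IntermediateField.adjoin (KW w A)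
        {algebraMap (MvPolynomial (Fin n) k) (FractionRing (MvPolynomial (Fin n) k))
          (lform w g)}))
    (M : WithBot Γ)
    (hM : M = wedgeDeg w (Fin.snoc f g) + ((-dω - dg : Γ) : WithBot Γ)) :
    wdeg w (Φ.eval g) ≥ Φ.natDegree • wdeg w g + (Φ.natDegree / N) • M ∧
    Φ.natDegree • wdeg w g + (Φ.natDegree / N) • M
      = (Φ.natDegree / N) • (N • wdeg w g + M) + (Φ.natDegree % N) • wdeg w g := by
  have hint := halg.isIntegral
  replace hN := hN.trans (IntermediateField.adjoin.finrank hint)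
  obtain ⟨m, hm, hle⟩ := exists_le_rootMultiplicity_and_wdegG_add_nsmul_le hg hdg A
    (fun Θ hΘ => hM ▸ wdeg_derivative_eval_add_le w f hdω g (hA ▸ hΘ)) hΦ hΦA
  have hmN : m * N ≤ Φ.natDegree :=
    hN ▸ mul_natDegree_minpoly_le_of_le_rootMultiplicity_pLform hint hΦ hΦA hm
  refine ⟨?_, nsmul_add_div_nsmul_eq _ _ _ _⟩
  calc Φ.natDegree • wdeg w g + (Φ.natDegree / N) • M ≤ wdegG w g Φ + m • M :=
        add_le_add
          (natDegree_nsmul_wdeg_le_wdegG (hw _ (hΦA _) (Polynomial.leadingCoeff_ne_zero.2 hΦ)))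
          (nsmul_le_nsmul_left_of_nonpos (hM ▸ wedgeDeg_snoc_add_neg_sub_nonpos w f hdω hdg)
            ((Nat.le_div_iff_mul_le (hN ▸ minpoly.natDegree_pos hint)).2 hmN))
    _ ≤ wdeg w (Φ.eval g) := hle

/-- Theorem (i): if `f_1, …, f_r` are algebraically independent, `A = k[f_1,…,f_r]`,
`ω = df_1 ∧ ⋯ ∧ df_r`, `deg_w h ≥ 0` for all nonzero `h ∈ A`, and `g^w` is algebraic
over `K^w`, then with `N = [K^w(g^w):K^w]`, `a = deg_y Φ / N`, `b = deg_y Φ % N` and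
`M = deg_w(ω ∧ dg) − deg_w ω − deg_w g`:
`deg_w Φ(g) ≥ (deg_y Φ)·deg_w g + a·M = a·(N·deg_w g + M) + b·deg_w g`. -/
theorem stmt7 (r : ℕ) (hr : 0 < r) (f : Fin r → MvPolynomial (Fin n) k)
    (hf : AlgebraicIndependent k f)
    (g : MvPolynomial (Fin n) k) (hg : g ≠ 0) (w : Fin n → Γ)
    (A : Subalgebra k (MvPolynomial (Fin n) k)) (hA : A = Algebra.adjoin k (Set.range f))
    (hw : ∀ h ∈ A, h ≠ 0 → ((0 : Γ) : WithBot Γ) ≤ wdeg w h)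
    (halg : IsAlgebraic (KW w A)
      (algebraMap (MvPolynomial (Fin n) k) (FractionRing (MvPolynomial (Fin n) k))
        (lform w g)))
    (Φ : Polynomial (MvPolynomial (Fin n) k)) (hΦ : Φ ≠ 0) (hΦA : ∀ i, Φ.coeff i ∈ A)
    (dω dg : Γ) (hdω : wedgeDeg w f = (dω : WithBot Γ)) (hdg : wdeg w g = (dg : WithBot Γ))
    (N : ℕ)
    (hN : N = Module.finrank (KW w A)
      (IntermediateField.adjoin (KW w A)
        {algebraMap (MvPolynomial (Fin n) k) (FractionRing (MvPolynomial (Fin n) k))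
          (lform w g)}))
    (M : WithBot Γ)
    (hM : M = wedgeDeg w (Fin.snoc f g) + ((-dω - dg : Γ) : WithBot Γ)) :
    wdeg w (Φ.eval g) ≥ Φ.natDegree • wdeg w g + (Φ.natDegree / N) • M ∧
    Φ.natDegree • wdeg w g + (Φ.natDegree / N) • M
      = (Φ.natDegree / N) • (N • wdeg w g + M) + (Φ.natDegree % N) • wdeg w g :=
  stmt7_general r f g hg w A hA hw halg Φ hΦ hΦA dω dg hdω hdg N hN M hM
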